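/- arXiv:2009.01550 — 2 statements merged into one kernel-verified Lean document; each statement's English description precedes it below -/
import Mathlib

section
/- Let u be a nonnegative measurable function on ℝⁿ with finite L¹ and L^∞ norms, and fix R = ‖u‖₁^{1/n} ‖u‖_∞^{-1/n}. Then for every x ∈ ℝⁿ, ∫_{B_R(x)} |u(z)|/|x−z|^{n−1} dz ≤ C ‖u‖_∞ R and ∫_{ℝⁿ \ B_R(x)} |u(z)|/|x−z|^{n−1} dz ≤ C ‖u‖_{3/2} R^{1−2n/3}, where C depends only on n ≥ 2. -/
/-!
Only `R > 0` matters, and it holds unless `u = 0` a.e. Split the kernel `|x - z|^{-(n-1)}` at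
radius `R`. On `B_R(x)` bound `|u|` by `‖u‖_∞`; on the complement apply Hölder with exponents
`3/2` and `3`, which leaves `(∫_{|x-z| ≥ R} |x-z|^{-3(n-1)})^{1/3}`, finite since `3(n-1) > n`.
Both kernel integrals are summed over dyadic shells `ρ ≤ |x - z| ≤ 2ρ`, where the kernel is at
most `ρ^{-s}` and the shell has measure at most `(2ρ)^n |B_1|`: the series is geometric, and sums
to `≲ R^{n-s}` exactly when `s < n` (near part) or `s > n` (far part).
-/

open MeasureTheory Metric Module Set
open scoped ENNReal NNReal

theorem ball_subset_insert_iUnion_shells {X : Type*} [MetricSpace X] (x : X) (R : ℝ) :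
    ball x R ⊆
      insert x (⋃ k : ℕ,
        closedBall x (2 * (R / 2 * 2⁻¹ ^ k)) \ ball x (R / 2 * 2⁻¹ ^ k)) := by
  intro z hz
  rcases eq_or_ne z x with rfl | hzx
  · exact mem_insert _ _
  have hR : 0 < R := dist_nonneg.trans_lt hz
  obtain ⟨k, hlt, hle⟩ := exists_nat_pow_near_of_lt_one (div_pos (dist_pos.2 hzx) hR)
    ((div_le_one hR).2 (mem_ball.1 hz).le) (by norm_num : (0 : ℝ) < 2⁻¹) (by norm_num)
  rw [lt_div_iff₀ hR, pow_succ] at hlt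
  rw [div_le_iff₀ hR] at hle
  refine mem_insert_of_mem _ (mem_iUnion.2 ⟨k, mem_closedBall.2 ?_, fun h => ?_⟩)
  · linarith
  · linarith [mem_ball.1 h]

theorem compl_ball_subset_iUnion_shells {X : Type*} [PseudoMetricSpace X] (x : X) {R : ℝ}
    (hR : 0 < R) :
    (ball x R)ᶜ ⊆ ⋃ k : ℕ, closedBall x (2 * (R * 2 ^ k)) \ ball x (R * 2 ^ k) := by
  intro z hz
  obtain ⟨k, hle, hlt⟩ := exists_nat_pow_near ((le_div_iff₀ hR).2 (by simpa using hz))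
    (by norm_num : (1 : ℝ) < 2)
  rw [le_div_iff₀ hR] at hle
  rw [div_lt_iff₀ hR, pow_succ] at hlt
  refine mem_iUnion.2 ⟨k, mem_closedBall.2 ?_, fun h => ?_⟩
  · linarith
  · linarith [mem_ball.1 h]

theorem tsum_ofReal_mul_pow_rpow {a q : ℝ} (ha : 0 < a) (hq : 0 < q) (t : ℝ) :
    ∑' k : ℕ, ENNReal.ofReal (a * q ^ k) ^ t =
      ENNReal.ofReal a ^ t * (1 - ENNReal.ofReal q ^ t)⁻¹ := by
  have hterm (k : ℕ) :
      ENNReal.ofReal (a * q ^ k) ^ t = ENNReal.ofReal a ^ t * (ENNReal.ofReal q ^ t) ^ k := by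
    rw [ENNReal.ofReal_mul ha.le, ENNReal.ofReal_pow hq.le,
      ENNReal.mul_rpow_of_ne_zero (by positivity) (by positivity), ← ENNReal.rpow_natCast_mul,
      mul_comm (k : ℝ), ENNReal.rpow_mul_natCast]
  simp only [hterm, ENNReal.tsum_mul_left, ENNReal.tsum_geometric]

theorem enorm_div_le_enorm_div_enorm {𝕜 : Type*} [NormedDivisionRing 𝕜] (a b : 𝕜) :
    ‖a / b‖ₑ ≤ ‖a‖ₑ / ‖b‖ₑ := by
  rcases eq_or_ne b 0 with rfl | hb
  · simp
  · rw [enorm_eq_nnnorm, enorm_eq_nnnorm, enorm_eq_nnnorm, nnnorm_div,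
      ENNReal.coe_div (nnnorm_ne_zero_iff.2 hb)]

theorem integral_le_toReal_of_lintegral_enorm_le {α : Type*} [MeasurableSpace α] {μ : Measure α}
    {f : α → ℝ} {B : ℝ≥0∞} (hB : B ≠ ⊤) (h : ∫⁻ a, ‖f a‖ₑ ∂μ ≤ B) :
    ∫ a, f a ∂μ ≤ B.toReal :=
  calc ∫ a, f a ∂μ ≤ ‖∫ a, f a ∂μ‖ₑ.toReal := by
        rw [toReal_enorm]
        exact le_abs_self _
    _ ≤ B.toReal := ENNReal.toReal_mono hB ((enorm_integral_le_lintegral_enorm f).trans h)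

section LpBounds

variable {α ε : Type*} [MeasurableSpace α] {μ : Measure α} [TopologicalSpace ε]
  [ContinuousENorm ε]

theorem MeasureTheory.MemLp.of_one_of_top {f : α → ε} (h₁ : MemLp f 1 μ)
    (h_top : MemLp f ∞ μ) {p : ℝ≥0∞} (hp : 1 ≤ p) : MemLp f p μ := by
  rcases eq_or_ne p ∞ with rfl | hp_top
  · exact h_top
  refine ⟨h₁.1, (eLpNorm_lt_top_iff_lintegral_rpow_enorm_lt_top (by positivity) hp_top).2 ?_⟩
  have hp₁ : 1 ≤ p.toReal := by simpa using ENNReal.toReal_mono hp_top hp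
  calc ∫⁻ a, ‖f a‖ₑ ^ p.toReal ∂μ
      ≤ ∫⁻ a, eLpNorm f ∞ μ ^ (p.toReal - 1) * ‖f a‖ₑ ∂μ := by
        refine lintegral_mono_ae ?_
        filter_upwards [enorm_ae_le_eLpNormEssSup f μ] with a ha
        calc ‖f a‖ₑ ^ p.toReal = ‖f a‖ₑ ^ (p.toReal - 1) * ‖f a‖ₑ := by
              conv_lhs => rw [← sub_add_cancel p.toReal 1]
              rw [ENNReal.rpow_add_of_nonneg _ _ (by linarith) zero_le_one, ENNReal.rpow_one]
          _ ≤ eLpNorm f ∞ μ ^ (p.toReal - 1) * ‖f a‖ₑ := by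
              gcongr
              rwa [eLpNorm_exponent_top]
    _ = eLpNorm f ∞ μ ^ (p.toReal - 1) * eLpNorm f 1 μ := by
        rw [lintegral_const_mul'' _ h₁.1.enorm, eLpNorm_one_eq_lintegral_enorm]
    _ < ∞ := ENNReal.mul_lt_top (ENNReal.rpow_lt_top_of_nonneg (by linarith) h_top.2.ne) h₁.2

theorem lintegral_enorm_mul_le_eLpNorm_top_mul (f : α → ε) {g : α → ℝ≥0∞}
    (hg : AEMeasurable g μ) :
    ∫⁻ a, ‖f a‖ₑ * g a ∂μ ≤ eLpNorm f ∞ μ * ∫⁻ a, g a ∂μ := by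
  rw [← lintegral_const_mul'' _ hg]
  refine lintegral_mono_ae ?_
  filter_upwards [enorm_ae_le_eLpNormEssSup f μ] with a ha
  rw [eLpNorm_exponent_top]
  gcongr

theorem lintegral_enorm_mul_le_eLpNorm_mul {p q : ℝ} (hpq : p.HolderConjugate q) {f : α → ε}
    (hf : AEStronglyMeasurable f μ) {g : α → ℝ≥0∞} (hg : AEMeasurable g μ) :
    ∫⁻ a, ‖f a‖ₑ * g a ∂μ ≤
      eLpNorm f (ENNReal.ofReal p) μ * (∫⁻ a, g a ^ q ∂μ) ^ (1 / q) := by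
  rw [eLpNorm_eq_lintegral_rpow_enorm_toReal (by simpa using hpq.pos) ENNReal.ofReal_ne_top,
    ENNReal.toReal_ofReal hpq.nonneg]
  exact ENNReal.lintegral_mul_le_Lp_mul_Lq μ hpq hf.enorm hg

end LpBounds

theorem MeasureTheory.MemLp.toReal_eLpNorm_pos {α F : Type*} [MeasurableSpace α] {μ : Measure α}
    [NormedAddCommGroup F] {f : α → F} {p : ℝ≥0∞} (hf : MemLp f p μ) (hp : p ≠ 0)
    (h : ¬f =ᵐ[μ] 0) : 0 < (eLpNorm f p μ).toReal :=
  ENNReal.toReal_pos (fun h₀ => h ((eLpNorm_eq_zero_iff hf.1 hp).1 h₀)) hf.2.ne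

theorem enorm_abs_div_norm_pow_le {E : Type*} [SeminormedAddCommGroup E] (a : ℝ) (y : E)
    (k : ℕ) : ‖|a| / ‖y‖ ^ k‖ₑ ≤ ‖a‖ₑ * (‖y‖ₑ ^ (k : ℝ))⁻¹ :=
  (enorm_div_le_enorm_div_enorm _ _).trans_eq <| by
    rw [Real.enorm_abs, enorm_pow, enorm_norm, ENNReal.rpow_natCast, div_eq_mul_inv]

section Riesz

variable {E : Type*} [NormedAddCommGroup E] [NormedSpace ℝ E] [FiniteDimensional ℝ E]
  [MeasurableSpace E] [BorelSpace E] (μ : Measure E) [μ.IsAddHaarMeasure]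

theorem setLIntegral_shell_rpow_inv_le (x : E) {ρ : ℝ} (hρ : 0 < ρ) {s : ℝ} (hs : 0 ≤ s) :
    ∫⁻ z in closedBall x (2 * ρ) \ ball x ρ, (‖x - z‖ₑ ^ s)⁻¹ ∂μ ≤
      2 ^ finrank ℝ E * μ (ball 0 1) * ENNReal.ofReal ρ ^ ((finrank ℝ E : ℝ) - s) := by
  have hρ₀ : ENNReal.ofReal ρ ≠ 0 := by positivity
  calc ∫⁻ z in closedBall x (2 * ρ) \ ball x ρ, (‖x - z‖ₑ ^ s)⁻¹ ∂μ
      ≤ ∫⁻ _ in closedBall x (2 * ρ) \ ball x ρ, (ENNReal.ofReal ρ ^ s)⁻¹ ∂μ := by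
        refine setLIntegral_mono' (measurableSet_closedBall.diff measurableSet_ball) fun z hz => ?_
        have hρz : ENNReal.ofReal ρ ≤ ‖x - z‖ₑ := by
          rw [← ofReal_norm, ← dist_eq_norm, dist_comm]
          exact ENNReal.ofReal_le_ofReal (not_lt.1 hz.2)
        exact ENNReal.inv_le_inv.2 (ENNReal.rpow_le_rpow hρz hs)
    _ ≤ (ENNReal.ofReal ρ ^ s)⁻¹ * μ (closedBall x (2 * ρ)) := by
        rw [setLIntegral_const]
        gcongr
        exact sdiff_subset
    _ = 2 ^ finrank ℝ E * μ (ball 0 1) * ENNReal.ofReal ρ ^ ((finrank ℝ E : ℝ) - s) := by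
        rw [Measure.addHaar_closedBall μ x (by positivity),
          ENNReal.rpow_sub _ _ hρ₀ ENNReal.ofReal_ne_top,
          ENNReal.rpow_natCast, ENNReal.ofReal_pow (by positivity), ENNReal.ofReal_mul zero_le_two,
          ENNReal.ofReal_ofNat, div_eq_mul_inv, mul_pow]
        ring

theorem setLIntegral_rpow_inv_le_tsum_shells (x : E) {S : Set E} {ρ : ℕ → ℝ}
    (hρ : ∀ k, 0 < ρ k) (hS : S ⊆ ⋃ k, closedBall x (2 * ρ k) \ ball x (ρ k)) {s : ℝ}
    (hs : 0 ≤ s) :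
    ∫⁻ z in S, (‖x - z‖ₑ ^ s)⁻¹ ∂μ ≤
      2 ^ finrank ℝ E * μ (ball 0 1) *
        ∑' k, ENNReal.ofReal (ρ k) ^ ((finrank ℝ E : ℝ) - s) :=
  calc ∫⁻ z in S, (‖x - z‖ₑ ^ s)⁻¹ ∂μ
      ≤ ∑' k, ∫⁻ z in closedBall x (2 * ρ k) \ ball x (ρ k),
          (‖x - z‖ₑ ^ s)⁻¹ ∂μ :=
        (lintegral_mono_set hS).trans (lintegral_iUnion_le _ _)
    _ ≤ _ := by
        rw [← ENNReal.tsum_mul_left]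
        exact ENNReal.tsum_le_tsum fun k => setLIntegral_shell_rpow_inv_le μ x (hρ k) hs

theorem exists_setLIntegral_ball_rpow_inv_le {s : ℝ} (hs : 0 ≤ s) (hsd : s < finrank ℝ E) :
    ∃ C : ℝ≥0, ∀ (x : E) (R : ℝ), 0 < R →
      ∫⁻ z in ball x R, (‖x - z‖ₑ ^ s)⁻¹ ∂μ ≤
        C * ENNReal.ofReal R ^ ((finrank ℝ E : ℝ) - s) := by
  -- so that the centre `x` is a null set
  have : Nontrivial E := Module.nontrivial_of_finrank_pos (Nat.cast_pos.1 (hs.trans_lt hsd))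
  set q := ENNReal.ofReal 2⁻¹ ^ ((finrank ℝ E : ℝ) - s)
  have hq : q < 1 := ENNReal.rpow_lt_one (by norm_num) (sub_pos.2 hsd)
  set C := 2 ^ finrank ℝ E * μ (ball 0 1) * (1 - q)⁻¹
  have hC : C ≠ ⊤ := ENNReal.mul_ne_top (ENNReal.mul_ne_top (by simp) measure_ball_lt_top.ne)
    (ENNReal.inv_ne_top.2 (tsub_pos_iff_lt.2 hq).ne')
  refine ⟨C.toNNReal, fun x R hR => ?_⟩
  rw [ENNReal.coe_toNNReal hC]
  calc ∫⁻ z in ball x R, (‖x - z‖ₑ ^ s)⁻¹ ∂μ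
      ≤ ∫⁻ z in ⋃ k : ℕ,
          closedBall x (2 * (R / 2 * 2⁻¹ ^ k)) \ ball x (R / 2 * 2⁻¹ ^ k),
          (‖x - z‖ₑ ^ s)⁻¹ ∂μ :=
        (lintegral_mono_set (ball_subset_insert_iUnion_shells x R)).trans_eq
          (setLIntegral_congr (insert_ae_eq_self x _))
    _ ≤ 2 ^ finrank ℝ E * μ (ball 0 1) *
          ∑' k : ℕ, ENNReal.ofReal (R / 2 * 2⁻¹ ^ k) ^ ((finrank ℝ E : ℝ) - s) :=
        setLIntegral_rpow_inv_le_tsum_shells μ x (fun k => by positivity) subset_rfl hs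
    _ ≤ C * ENNReal.ofReal R ^ ((finrank ℝ E : ℝ) - s) := by
        rw [tsum_ofReal_mul_pow_rpow (by positivity) (by positivity), mul_left_comm, mul_comm C]
        gcongr
        exact half_le_self hR.le

theorem exists_setLIntegral_compl_ball_rpow_inv_le {s : ℝ} (hds : (finrank ℝ E : ℝ) < s) :
    ∃ C : ℝ≥0, ∀ (x : E) (R : ℝ), 0 < R →
      ∫⁻ z in (ball x R)ᶜ, (‖x - z‖ₑ ^ s)⁻¹ ∂μ ≤
        C * ENNReal.ofReal R ^ ((finrank ℝ E : ℝ) - s) := by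
  set q := ENNReal.ofReal 2 ^ ((finrank ℝ E : ℝ) - s)
  have hq : q < 1 := ENNReal.rpow_lt_one_of_one_lt_of_neg (by simp) (sub_neg.2 hds)
  set C := 2 ^ finrank ℝ E * μ (ball 0 1) * (1 - q)⁻¹
  have hC : C ≠ ⊤ := ENNReal.mul_ne_top (ENNReal.mul_ne_top (by simp) measure_ball_lt_top.ne)
    (ENNReal.inv_ne_top.2 (tsub_pos_iff_lt.2 hq).ne')
  refine ⟨C.toNNReal, fun x R hR => ?_⟩
  rw [ENNReal.coe_toNNReal hC]
  calc ∫⁻ z in (ball x R)ᶜ, (‖x - z‖ₑ ^ s)⁻¹ ∂μ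
      ≤ 2 ^ finrank ℝ E * μ (ball 0 1) *
          ∑' k : ℕ, ENNReal.ofReal (R * 2 ^ k) ^ ((finrank ℝ E : ℝ) - s) :=
        setLIntegral_rpow_inv_le_tsum_shells μ x (fun k => by positivity)
          (compl_ball_subset_iUnion_shells x hR) ((Nat.cast_nonneg _).trans hds.le)
    _ = C * ENNReal.ofReal R ^ ((finrank ℝ E : ℝ) - s) := by
        rw [tsum_ofReal_mul_pow_rpow hR two_pos]
        ring

theorem exists_setIntegral_ball_abs_div_norm_pow_le {k : ℕ} (hk : k < finrank ℝ E) :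
    ∃ C : ℝ≥0, ∀ (u : E → ℝ) (x : E) (R : ℝ), 0 < R → MemLp u ∞ μ →
      ∫ z in ball x R, |u z| / ‖x - z‖ ^ k ∂μ ≤
        C * (eLpNorm u ∞ μ).toReal * R ^ ((finrank ℝ E : ℝ) - k) := by
  obtain ⟨C, hC⟩ := exists_setLIntegral_ball_rpow_inv_le μ (Nat.cast_nonneg k)
    (by exact_mod_cast hk)
  refine ⟨C, fun u x R hR hu => ?_⟩
  have hM := hu.eLpNorm_ne_top
  have hlint : ∫⁻ z in ball x R, ‖|u z| / ‖x - z‖ ^ k‖ₑ ∂μ ≤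
      eLpNorm u ∞ μ * (C * ENNReal.ofReal R ^ ((finrank ℝ E : ℝ) - k)) :=
    calc ∫⁻ z in ball x R, ‖|u z| / ‖x - z‖ ^ k‖ₑ ∂μ
        ≤ ∫⁻ z in ball x R, ‖u z‖ₑ * (‖x - z‖ₑ ^ (k : ℝ))⁻¹ ∂μ :=
          lintegral_mono fun z => enorm_abs_div_norm_pow_le _ _ _
      _ ≤ eLpNorm u ∞ (μ.restrict (ball x R)) *
            ∫⁻ z in ball x R, (‖x - z‖ₑ ^ (k : ℝ))⁻¹ ∂μ :=
          lintegral_enorm_mul_le_eLpNorm_top_mul u (by fun_prop)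
      _ ≤ eLpNorm u ∞ μ * (C * ENNReal.ofReal R ^ ((finrank ℝ E : ℝ) - k)) :=
          mul_le_mul' (eLpNorm_restrict_le _ _ _ _) (hC x R hR)
  refine (integral_le_toReal_of_lintegral_enorm_le (by finiteness) hlint).trans_eq ?_
  rw [ENNReal.ofReal_rpow_of_pos hR, ENNReal.toReal_mul, ENNReal.toReal_mul,
    ENNReal.coe_toReal, ENNReal.toReal_ofReal (by positivity)]
  ring

theorem exists_setIntegral_compl_ball_abs_div_norm_pow_le {p q : ℝ} (hpq : p.HolderConjugate q)
    {k : ℕ} (hqk : finrank ℝ E < q * k) :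
    ∃ C : ℝ≥0, ∀ (u : E → ℝ) (x : E) (R : ℝ), 0 < R →
      MemLp u (ENNReal.ofReal p) μ →
      ∫ z in (ball x R)ᶜ, |u z| / ‖x - z‖ ^ k ∂μ ≤
        C * (eLpNorm u (ENNReal.ofReal p) μ).toReal *
          R ^ (((finrank ℝ E : ℝ) - q * k) / q) := by
  obtain ⟨C, hC⟩ := exists_setLIntegral_compl_ball_rpow_inv_le μ hqk
  refine ⟨C ^ (1 / q), fun u x R hR hu => ?_⟩
  have hq := hpq.symm.pos
  have hL := hu.eLpNorm_ne_top
  have hlint : ∫⁻ z in (ball x R)ᶜ, ‖|u z| / ‖x - z‖ ^ k‖ₑ ∂μ ≤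
      eLpNorm u (ENNReal.ofReal p) μ *
        (C * ENNReal.ofReal R ^ ((finrank ℝ E : ℝ) - q * k)) ^ (1 / q) :=
    calc ∫⁻ z in (ball x R)ᶜ, ‖|u z| / ‖x - z‖ ^ k‖ₑ ∂μ
        ≤ ∫⁻ z in (ball x R)ᶜ, ‖u z‖ₑ * (‖x - z‖ₑ ^ (k : ℝ))⁻¹ ∂μ :=
          lintegral_mono fun z => enorm_abs_div_norm_pow_le _ _ _
      _ ≤ eLpNorm u (ENNReal.ofReal p) (μ.restrict (ball x R)ᶜ) *
            (∫⁻ z in (ball x R)ᶜ, ((‖x - z‖ₑ ^ (k : ℝ))⁻¹) ^ q ∂μ) ^ (1 / q) :=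
          lintegral_enorm_mul_le_eLpNorm_mul hpq hu.1.restrict (by fun_prop)
      _ = eLpNorm u (ENNReal.ofReal p) (μ.restrict (ball x R)ᶜ) *
            (∫⁻ z in (ball x R)ᶜ, (‖x - z‖ₑ ^ (q * k))⁻¹ ∂μ) ^ (1 / q) := by
          simp_rw [ENNReal.inv_rpow, ← ENNReal.rpow_mul, mul_comm (k : ℝ) q]
      _ ≤ eLpNorm u (ENNReal.ofReal p) μ *
            (C * ENNReal.ofReal R ^ ((finrank ℝ E : ℝ) - q * k)) ^ (1 / q) := by
          gcongr
          · exact Measure.restrict_le_self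
          · exact hC x R hR
  refine (integral_le_toReal_of_lintegral_enorm_le (by finiteness) hlint).trans_eq ?_
  rw [ENNReal.mul_rpow_of_nonneg _ _ (by positivity), ← ENNReal.rpow_mul, mul_one_div,
    ENNReal.ofReal_rpow_of_pos hR, ← ENNReal.coe_rpow_of_nonneg _ (by positivity),
    ENNReal.toReal_mul, ENNReal.toReal_mul, ENNReal.coe_toReal,
    ENNReal.toReal_ofReal (by positivity)]
  ring

end Riesz

/-- Splitting estimate used in the potential bound: for `n ≥ 2`, nonnegative measurable
`u ∈ L¹ ∩ L^∞` and `R = ‖u‖₁^{1/n} ‖u‖_∞^{-1/n}`, the near and far parts of the Riesz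
potential integral satisfy the stated bounds, with `C` depending only on `n`. -/
theorem stmt1 (n : ℕ) (hn : 2 ≤ n) :
    ∃ C : ℝ, 0 < C ∧
      ∀ u : EuclideanSpace ℝ (Fin n) → ℝ,
        Measurable u → (∀ z, 0 ≤ u z) →
        MemLp u 1 volume → MemLp u ⊤ volume →
        ∀ R : ℝ,
          R = (eLpNorm u 1 volume).toReal ^ ((1 : ℝ) / n) *
                (eLpNorm u ⊤ volume).toReal ^ (-(1 : ℝ) / n) →
        ∀ x : EuclideanSpace ℝ (Fin n),
          (∫ z in Metric.ball x R, |u z| / ‖x - z‖ ^ (n - 1)) ≤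
              C * (eLpNorm u ⊤ volume).toReal * R ∧
          (∫ z in (Metric.ball x R)ᶜ, |u z| / ‖x - z‖ ^ (n - 1)) ≤
              C * (eLpNorm u ((3 : ℝ≥0∞) / 2) volume).toReal *
                R ^ (1 - 2 * (n : ℝ) / 3) := by
  have hn₁ : ((n - 1 : ℕ) : ℝ) = n - 1 := by rw [Nat.cast_sub (by omega), Nat.cast_one]
  have hn₂ : (2 : ℝ) ≤ n := by exact_mod_cast hn
  have h32 : ENNReal.ofReal (3 / 2) = 3 / 2 := by norm_num [ENNReal.ofReal_div_of_pos]
  obtain ⟨C₁, hC₁⟩ := exists_setIntegral_ball_abs_div_norm_pow_le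
    (volume : Measure (EuclideanSpace ℝ (Fin n))) (k := n - 1)
    (by rw [finrank_euclideanSpace_fin]; omega)
  obtain ⟨C₂, hC₂⟩ := exists_setIntegral_compl_ball_abs_div_norm_pow_le
    (volume : Measure (EuclideanSpace ℝ (Fin n))) (p := 3 / 2) (q := 3) (k := n - 1)
    (by constructor <;> norm_num) (by simp only [finrank_euclideanSpace_fin, hn₁]; linarith)
  simp only [finrank_euclideanSpace_fin, hn₁, sub_sub_cancel, Real.rpow_one] at hC₁
  simp only [finrank_euclideanSpace_fin, hn₁, h32] at hC₂
  refine ⟨C₁ + C₂ + 1, by positivity, fun u _ _ hu₁ hu_top R hR x => ?_⟩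
  by_cases hu : u =ᵐ[volume] 0
  · have hzero (S : Set (EuclideanSpace ℝ (Fin n))) :
        ∫ z in S, |u z| / ‖x - z‖ ^ (n - 1) = 0 :=
      integral_eq_zero_of_ae (ae_restrict_of_ae (hu.mono fun z hz => by simp [hz]))
    have hR₀ : 0 ≤ R := hR ▸ by positivity
    rw [hzero, hzero]
    exact ⟨by positivity, by positivity⟩
  have hRpos : 0 < R := by
    have := hu₁.toReal_eLpNorm_pos one_ne_zero hu
    have := hu_top.toReal_eLpNorm_pos ENNReal.top_ne_zero hu
    rw [hR]
    positivity
  have hu₃₂ : MemLp u (3 / 2) volume :=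
    hu₁.of_one_of_top hu_top (h32 ▸ ENNReal.one_le_ofReal.2 (by norm_num))
  refine ⟨(hC₁ u x R hRpos hu_top).trans ?_, (hC₂ u x R hRpos hu₃₂).trans ?_⟩
  · gcongr
    linarith
  · rw [show ((n : ℝ) - 3 * (n - 1)) / 3 = 1 - 2 * n / 3 by ring]
    gcongr
    linarith
end

section
/- Let n ≥ 1 and consider the semigroup kernel: for f ∈ L¹(ℝⁿ) and τ > 0, define (Sₙ(τ)f)(ξ) = (4π a(τ))^{−n/2} ∫_{ℝⁿ} f(η) exp(−|ξ − e^{−τ/2} η|²/(4a(τ))) dη, where a(τ) = 1 − e^{−τ}. If f ∈ L¹(ℝⁿ), then Sₙ(τ)f converges in L¹(ℝⁿ) to (∫f) · 𝒢ₙ as τ → ∞, where 𝒢ₙ(ξ) = (4π)^{−n/2} e^{−|ξ|²/4}. -/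
/-!
With `G_a(x) = (4πa)^{-n/2} e^{-|x|²/(4a)}` the heat kernel, `Sₙ(τ)f - (∫ f) 𝒢ₙ` is the function
`ξ ↦ ∫ f(η) (G_{a(τ)}(ξ - e^{-τ/2} η) - G_1(ξ)) dη`, so by Tonelli its `L¹` norm is at most
`∫ |f(η)| ‖G_{a(τ)}(· - e^{-τ/2} η) - G_1‖₁ dη`. Each inner distance is at most `2`, and it tends
to `0` by Scheffé's lemma: the kernels are probability densities converging pointwise to `G_1`
as `a(τ) → 1` and `e^{-τ/2} η → 0`. Dominated convergence in `η` concludes.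
-/

open MeasureTheory Real Filter
open scoped ENNReal Topology

section Scheffe

variable {α : Type*} [MeasurableSpace α] {μ : Measure α}

theorem abs_sub_eq_add_sub_two_mul_min (a b : ℝ) : |a - b| = a + b - 2 * min a b := by
  rcases le_total a b with h | h
  · rw [min_eq_left h, abs_of_nonpos (sub_nonpos.2 h)]; ring
  · rw [min_eq_right h, abs_of_nonneg (sub_nonneg.2 h)]; ring

theorem tendsto_lintegral_enorm_sub_of_integral_eq {ι : Type*} {l : Filter ι}
    [l.IsCountablyGenerated] {F : ι → α → ℝ} {g : α → ℝ} (hg : Integrable g μ)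
    (hF_int : ∀ᶠ i in l, Integrable (F i) μ) (hF_nonneg : ∀ᶠ i in l, 0 ≤ᵐ[μ] F i)
    (hF_integral : ∀ᶠ i in l, ∫ x, F i x ∂μ = ∫ x, g x ∂μ)
    (hF_lim : ∀ᵐ x ∂μ, Tendsto (fun i => F i x) l (𝓝 (g x))) :
    Tendsto (fun i => ∫⁻ x, ‖F i x - g x‖ₑ ∂μ) l (𝓝 0) := by
  -- `|F - g| = F + g - 2 min F g`, and `min F g → g` with the integrable bound `|g|`.
  have h_min : Tendsto (fun i => ∫ x, min (F i x) (g x) ∂μ) l (𝓝 (∫ x, g x ∂μ)) := by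
    refine tendsto_integral_filter_of_dominated_convergence (fun x => ‖g x‖)
      (hF_int.mono fun i hi => hi.1.inf hg.1) ?_ hg.norm ?_
    · filter_upwards [hF_nonneg] with i hi
      filter_upwards [hi] with x (hx : 0 ≤ F i x)
      rw [Real.norm_eq_abs, Real.norm_eq_abs, abs_le]
      exact ⟨le_min (by linarith [abs_nonneg (g x)]) (neg_abs_le _),
        (min_le_right _ _).trans (le_abs_self _)⟩
    · filter_upwards [hF_lim] with x hx
      simpa using hx.min (tendsto_const_nhds (x := g x))
  have h_eq : ∀ᶠ i in l, ∫⁻ x, ‖F i x - g x‖ₑ ∂μ =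
      ENNReal.ofReal (2 * ∫ x, g x ∂μ - 2 * ∫ x, min (F i x) (g x) ∂μ) := by
    filter_upwards [hF_int, hF_integral] with i hi hi_eq
    rw [← ofReal_integral_norm_eq_lintegral_enorm (f := fun x => F i x - g x) (hi.sub hg)]
    congr 1
    simp_rw [Real.norm_eq_abs, abs_sub_eq_add_sub_two_mul_min]
    have h_min_int : Integrable (fun x => min (F i x) (g x)) μ := hi.inf hg
    have h_add_int : Integrable (fun x => F i x + g x) μ := hi.add hg
    rw [integral_sub h_add_int (h_min_int.const_mul 2), integral_add hi hg,
      integral_const_mul, hi_eq]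
    ring
  have h_lim : Tendsto (fun i => 2 * ∫ x, g x ∂μ - 2 * ∫ x, min (F i x) (g x) ∂μ) l (𝓝 0) := by
    simpa using (h_min.const_mul 2).const_sub (2 * ∫ x, g x ∂μ)
  simpa using (ENNReal.tendsto_ofReal h_lim).congr' (EventuallyEq.symm h_eq)

end Scheffe

section KernelOperator

variable {X Y : Type*} [MeasurableSpace X] [MeasurableSpace Y] {μ : Measure X} {ν : Measure Y}
  [SFinite μ] [SFinite ν]

theorem lintegral_enorm_integral_mul_le {f : Y → ℝ} (hf : AEStronglyMeasurable f ν)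
    {k : X → Y → ℝ} (hk : Measurable (Function.uncurry k)) :
    ∫⁻ x, ‖∫ y, f y * k x y ∂ν‖ₑ ∂μ ≤ ∫⁻ y, ‖f y‖ₑ * ∫⁻ x, ‖k x y‖ₑ ∂μ ∂ν := by
  have h_meas : AEMeasurable (Function.uncurry fun x y => ‖f y * k x y‖ₑ) (μ.prod ν) :=
    (hf.comp_snd.mul hk.aestronglyMeasurable).enorm
  calc ∫⁻ x, ‖∫ y, f y * k x y ∂ν‖ₑ ∂μ ≤ ∫⁻ x, ∫⁻ y, ‖f y * k x y‖ₑ ∂ν ∂μ :=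
        lintegral_mono fun x => enorm_integral_le_lintegral_enorm _
    _ = ∫⁻ y, ∫⁻ x, ‖f y * k x y‖ₑ ∂μ ∂ν := lintegral_lintegral_swap h_meas
    _ = ∫⁻ y, ‖f y‖ₑ * ∫⁻ x, ‖k x y‖ₑ ∂μ ∂ν := by
        simp_rw [enorm_mul]
        congr with y
        exact lintegral_const_mul _ (hk.comp measurable_prodMk_right).enorm

theorem tendsto_lintegral_enorm_integral_mul {ι : Type*} {l : Filter ι} [l.IsCountablyGenerated]
    {f : Y → ℝ} (hf : Integrable f ν) {k : ι → X → Y → ℝ}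
    (hk : ∀ i, Measurable (Function.uncurry (k i))) {C : ℝ≥0∞} (hC : C ≠ ∞)
    (hk_bound : ∀ᶠ i in l, ∀ᵐ y ∂ν, ∫⁻ x, ‖k i x y‖ₑ ∂μ ≤ C)
    (hk_lim : ∀ᵐ y ∂ν, Tendsto (fun i => ∫⁻ x, ‖k i x y‖ₑ ∂μ) l (𝓝 0)) :
    Tendsto (fun i => ∫⁻ x, ‖∫ y, f y * k i x y ∂ν‖ₑ ∂μ) l (𝓝 0) := by
  have h_outer : Tendsto (fun i => ∫⁻ y, ‖f y‖ₑ * ∫⁻ x, ‖k i x y‖ₑ ∂μ ∂ν) l (𝓝 0) := by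
    simpa using tendsto_lintegral_filter_of_dominated_convergence' (f := 0) (fun y => ‖f y‖ₑ * C)
      (Eventually.of_forall fun i =>
        hf.1.enorm.mul (hk i).enorm.lintegral_prod_left.aemeasurable)
      (hk_bound.mono fun i hi => hi.mono fun y hy => mul_le_mul_right hy _)
      (by rw [lintegral_mul_const'' _ hf.1.enorm]; exact ENNReal.mul_ne_top hf.2.ne hC)
      (hk_lim.mono fun y hy => by simpa using ENNReal.Tendsto.const_mul hy (Or.inr enorm_ne_top))
  exact tendsto_of_tendsto_of_tendsto_of_le_of_le tendsto_const_nhds h_outer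
    (fun i => zero_le) fun i => lintegral_enorm_integral_mul_le hf.1 (hk i)

end KernelOperator

section HeatKernel

variable {V : Type*} [NormedAddCommGroup V] [InnerProductSpace ℝ V]

variable (V) in
noncomputable def heatKernel (a : ℝ) (x : V) : ℝ :=
  (4 * π * a) ^ (-(Module.finrank ℝ V : ℝ) / 2) * rexp (-‖x‖ ^ 2 / (4 * a))

theorem heatKernel_nonneg {a : ℝ} (ha : 0 ≤ a) (x : V) : 0 ≤ heatKernel V a x := by
  unfold heatKernel
  positivity

theorem heatKernel_le {a : ℝ} (ha : 0 ≤ a) (x : V) :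
    heatKernel V a x ≤ (4 * π * a) ^ (-(Module.finrank ℝ V : ℝ) / 2) := by
  refine mul_le_of_le_one_right (by positivity) (exp_le_one_iff.2 ?_)
  exact div_nonpos_of_nonpos_of_nonneg (neg_nonpos.2 (sq_nonneg _)) (by positivity)

@[fun_prop]
theorem continuous_heatKernel (a : ℝ) : Continuous (heatKernel V a) := by
  unfold heatKernel
  fun_prop

theorem continuousAt_heatKernel {a : ℝ} (ha : a ≠ 0) (x : V) :
    ContinuousAt (fun p : ℝ × V => heatKernel V p.1 p.2) (a, x) := by
  have h4a : 4 * π * a ≠ 0 := by positivity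
  unfold heatKernel
  exact ((continuousAt_fst.const_mul _).rpow_const (Or.inl h4a)).mul
    (((continuousAt_snd.norm.pow 2).neg.div (continuousAt_fst.const_mul 4) (by simpa)).rexp)

variable [MeasurableSpace V] [BorelSpace V]

theorem integral_mul_heatKernel_sub {ν : Measure V} {f : V → ℝ} (hf : Integrable f ν) {a : ℝ}
    (ha : 0 ≤ a) (b c : ℝ) (ξ : V) :
    ∫ η, f η * (heatKernel V a (ξ - c • η) - heatKernel V b ξ) ∂ν =
      (4 * π * a) ^ (-(Module.finrank ℝ V : ℝ) / 2) *
          (∫ η, f η * rexp (-‖ξ - c • η‖ ^ 2 / (4 * a)) ∂ν) -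
        (∫ η, f η ∂ν) * heatKernel V b ξ := by
  have h_int : Integrable (fun η => f η * heatKernel V a (ξ - c • η)) ν :=
    hf.mul_bdd (Continuous.aestronglyMeasurable (by fun_prop)) (ae_of_all _ fun η => by
      rw [Real.norm_of_nonneg (heatKernel_nonneg ha _)]
      exact heatKernel_le ha _)
  simp_rw [mul_sub]
  rw [integral_sub h_int (hf.mul_const _), integral_mul_const, ← integral_const_mul]
  simp_rw [heatKernel, mul_left_comm]

variable [FiniteDimensional ℝ V]

theorem integral_heatKernel {a : ℝ} (ha : 0 < a) : ∫ x, heatKernel V a x = 1 := by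
  have h4a : 0 < 4 * π * a := by positivity
  have h_exp : ∀ x : V, rexp (-‖x‖ ^ 2 / (4 * a)) = rexp (-(4 * a)⁻¹ * ‖x‖ ^ 2) := fun x => by
    ring_nf
  simp_rw [heatKernel, h_exp]
  rw [integral_const_mul, GaussianFourier.integral_rexp_neg_mul_sq_norm (by positivity),
    div_inv_eq_mul, show π * (4 * a) = 4 * π * a by ring, neg_div, rpow_neg h4a.le,
    inv_mul_cancel₀ (by positivity)]

theorem integrable_heatKernel {a : ℝ} (ha : 0 < a) : Integrable (heatKernel V a) :=
  Integrable.of_integral_ne_zero (by rw [integral_heatKernel ha]; exact one_ne_zero)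

theorem lintegral_enorm_heatKernel_sub_le {a b : ℝ} (ha : 0 < a) (hb : 0 < b) (v : V) :
    ∫⁻ x, ‖heatKernel V a (x - v) - heatKernel V b x‖ₑ ≤ 2 := by
  have h_one : ∀ {c : ℝ} (hc : 0 < c) (w : V), ∫⁻ x, ‖heatKernel V c (x - w)‖ₑ = 1 := by
    intro c hc w
    rw [← ofReal_integral_norm_eq_lintegral_enorm ((integrable_heatKernel hc).comp_sub_right w)]
    simp_rw [Real.norm_of_nonneg (heatKernel_nonneg hc.le _)]
    rw [integral_sub_right_eq_self (heatKernel V c), integral_heatKernel hc, ENNReal.ofReal_one]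
  calc ∫⁻ x, ‖heatKernel V a (x - v) - heatKernel V b x‖ₑ
      ≤ ∫⁻ x, ‖heatKernel V a (x - v)‖ₑ + ‖heatKernel V b x‖ₑ :=
        lintegral_mono fun x => enorm_sub_le
    _ = 2 := by
        have h_meas : Measurable fun x => ‖heatKernel V a (x - v)‖ₑ :=
          ((continuous_heatKernel a).comp (continuous_sub_right v)).measurable.enorm
        have h_b : ∫⁻ x, ‖heatKernel V b x‖ₑ = 1 := by simpa using h_one hb 0
        rw [lintegral_add_left h_meas, h_one ha, h_b, one_add_one_eq_two]

theorem tendsto_lintegral_enorm_heatKernel_sub {ι : Type*} {l : Filter ι}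
    [l.IsCountablyGenerated] {a : ι → ℝ} {v : ι → V} {b : ℝ} (hb : 0 < b)
    (ha : Tendsto a l (𝓝 b)) (hv : Tendsto v l (𝓝 0)) :
    Tendsto (fun i => ∫⁻ x, ‖heatKernel V (a i) (x - v i) - heatKernel V b x‖ₑ) l (𝓝 0) := by
  have h_pos : ∀ᶠ i in l, 0 < a i := ha.eventually (eventually_gt_nhds hb)
  refine tendsto_lintegral_enorm_sub_of_integral_eq (integrable_heatKernel hb)
    (h_pos.mono fun i hi => (integrable_heatKernel hi).comp_sub_right (v i))
    (h_pos.mono fun i hi => ae_of_all _ fun x => heatKernel_nonneg hi.le _)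
    (h_pos.mono fun i hi => by rw [integral_sub_right_eq_self (heatKernel V (a i)),
      integral_heatKernel hi, integral_heatKernel hb]) (ae_of_all _ fun x => ?_)
  have h_arg : Tendsto (fun i => (a i, x - v i)) l (𝓝 (b, x)) := by
    simpa using ha.prodMk_nhds (tendsto_const_nhds.sub hv)
  exact (continuousAt_heatKernel hb.ne' x).tendsto.comp h_arg

end HeatKernel

theorem stmt6_general (n : ℕ)
    (f : EuclideanSpace ℝ (Fin n) → ℝ) (hf : Integrable f volume) :
    Tendsto
      (fun τ : ℝ =>
        (eLpNorm
          (fun ξ : EuclideanSpace ℝ (Fin n) =>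
            (4 * π * (1 - Real.exp (-τ))) ^ (-(n : ℝ) / 2) *
                (∫ η, f η *
                  Real.exp (-‖ξ - Real.exp (-τ / 2) • η‖ ^ 2 / (4 * (1 - Real.exp (-τ))))) -
              (∫ x, f x) * ((4 * π) ^ (-(n : ℝ) / 2) * Real.exp (-‖ξ‖ ^ 2 / 4)))
          1 volume).toReal)
      atTop (nhds 0) := by
  let k : ℝ → EuclideanSpace ℝ (Fin n) → EuclideanSpace ℝ (Fin n) → ℝ := fun τ ξ η =>
    heatKernel _ (1 - rexp (-τ)) (ξ - rexp (-τ / 2) • η) - heatKernel _ 1 ξ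
  have h_var : ∀ᶠ τ in atTop, 0 < 1 - rexp (-τ) :=
    (eventually_gt_atTop 0).mono fun τ hτ => sub_pos.2 (exp_lt_one_iff.2 (neg_neg_of_pos hτ))
  have h_exp_half : Tendsto (fun τ : ℝ => rexp (-τ / 2)) atTop (𝓝 0) :=
    tendsto_exp_atBot.comp (tendsto_neg_atTop_atBot.atBot_div_const two_pos)
  have h_L1 : Tendsto (fun τ => ∫⁻ ξ, ‖∫ η, f η * k τ ξ η‖ₑ) atTop (𝓝 0) :=
    tendsto_lintegral_enorm_integral_mul (C := 2) hf (fun τ => by fun_prop) ENNReal.ofNat_ne_top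
      (h_var.mono fun τ hτ => ae_of_all _ fun η => lintegral_enorm_heatKernel_sub_le hτ one_pos _)
      (ae_of_all _ fun η => tendsto_lintegral_enorm_heatKernel_sub one_pos
        (by simpa using tendsto_exp_neg_atTop_nhds_zero.const_sub 1)
        (by simpa using h_exp_half.smul_const η))
  have h_eq : ∀ᶠ τ in atTop, ∫⁻ ξ, ‖∫ η, f η * k τ ξ η‖ₑ =
      eLpNorm (fun ξ : EuclideanSpace ℝ (Fin n) => (4 * π * (1 - rexp (-τ))) ^ (-(n : ℝ) / 2) *
          (∫ η, f η * rexp (-‖ξ - rexp (-τ / 2) • η‖ ^ 2 / (4 * (1 - rexp (-τ))))) -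
        (∫ x, f x) * ((4 * π) ^ (-(n : ℝ) / 2) * rexp (-‖ξ‖ ^ 2 / 4))) 1 volume := by
    filter_upwards [h_var] with τ hτ
    simp only [k, integral_mul_heatKernel_sub hf hτ.le]
    simp_rw [eLpNorm_one_eq_lintegral_enorm, heatKernel, finrank_euclideanSpace_fin, mul_one]
  exact (ENNReal.tendsto_toReal ENNReal.zero_ne_top).comp (h_L1.congr' h_eq)

/-- Long-time convergence of the Fokker–Planck (Mehler) semigroup: for `f ∈ L¹(ℝⁿ)`,
`Sₙ(τ)f → (∫ f) 𝒢ₙ` in `L¹` as `τ → ∞`, where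
`(Sₙ(τ)f)(ξ) = (4π a(τ))^{−n/2} ∫ f(η) exp(−|ξ − e^{−τ/2}η|²/(4a(τ))) dη`,
`a(τ) = 1 − e^{−τ}`, and `𝒢ₙ(ξ) = (4π)^{−n/2} e^{−|ξ|²/4}`. -/
theorem stmt6 (n : ℕ) (hn : 1 ≤ n)
    (f : EuclideanSpace ℝ (Fin n) → ℝ) (hf : Integrable f volume) :
    Tendsto
      (fun τ : ℝ =>
        (eLpNorm
          (fun ξ : EuclideanSpace ℝ (Fin n) =>
            (4 * π * (1 - Real.exp (-τ))) ^ (-(n : ℝ) / 2) *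
                (∫ η, f η *
                  Real.exp (-‖ξ - Real.exp (-τ / 2) • η‖ ^ 2 / (4 * (1 - Real.exp (-τ))))) -
              (∫ x, f x) * ((4 * π) ^ (-(n : ℝ) / 2) * Real.exp (-‖ξ‖ ^ 2 / 4)))
          1 volume).toReal)
      atTop (nhds 0) :=
  stmt6_general n f hf
end
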